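/- arXiv:2010.14332 — 4 statements merged into one kernel-verified Lean document; each statement's English description precedes it below -/
import Mathlib

section
/- If P(z) and P(z') are generalized permutahedra in ℝ^n parametrized by submodular functions z and z', then their Minkowski sum equals P(z+z'), the generalized permutahedron parametrized by the (submodular) function z+z'. -/
open Finset
open scoped Pointwise

/-- A submodular function on subsets of `[n]`. -/
def Submodular {n : ℕ} (z : Finset (Fin n) → ℝ) : Prop :=
  z ∅ = 0 ∧ ∀ I J : Finset (Fin n), z (I ∪ J) + z (I ∩ J) ≤ z I + z J

/-- The generalized permutahedron associated to `z`. -/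
def GenPerm {n : ℕ} (z : Finset (Fin n) → ℝ) : Set (Fin n → ℝ) :=
  {t | (∀ I : Finset (Fin n), I ≠ univ → ∑ i ∈ I, t i ≤ z I) ∧ ∑ i, t i = z univ}
open Finset

/-- Frank's discrete separation theorem, proved by induction on the ground set `S`. -/
lemma frank_sep {n : ℕ} (S : Finset (Fin n)) :
    ∀ (z p : Finset (Fin n) → ℝ),
    (∀ I J, I ⊆ S → J ⊆ S → z (I ∪ J) + z (I ∩ J) ≤ z I + z J) →
    (∀ I J, I ⊆ S → J ⊆ S → p I + p J ≤ p (I ∪ J) + p (I ∩ J)) →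
    (∀ I, I ⊆ S → p I ≤ z I) → p ∅ ≤ 0 → 0 ≤ z ∅ →
    ∃ u : Fin n → ℝ, ∀ I, I ⊆ S → p I ≤ ∑ i ∈ I, u i ∧ ∑ i ∈ I, u i ≤ z I := by
  induction S using Finset.induction_on with
  | empty =>
    intro z p _ _ hpz hp0 hz0
    refine ⟨0, fun I hI => ?_⟩
    rw [Finset.subset_empty] at hI
    subst hI
    simp only [Finset.sum_empty]
    exact ⟨hp0, hz0⟩
  | @insert e S' he ih =>
    intro z p hsub hsup hpz hp0 hz0
    -- choose α
    have hPne : (S'.powerset).Nonempty := ⟨∅, by simp⟩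
    set α : ℝ := max (p {e}) ((S'.powerset).sup' hPne fun I => p (insert e I) - z I) with hα
    have hαlb1 : p {e} ≤ α := le_max_left _ _
    have hαlb2 : ∀ I, I ⊆ S' → p (insert e I) - z I ≤ α := fun I hI =>
      le_trans (Finset.le_sup' (f := fun I => p (insert e I) - z I) (Finset.mem_powerset.2 hI)) (le_max_right _ _)
    have hIS : ∀ I : Finset (Fin n), I ⊆ S' → I ⊆ insert e S' := fun I hI =>
      hI.trans (Finset.subset_insert _ _)
    have hIeS : ∀ I : Finset (Fin n), I ⊆ S' → insert e I ⊆ insert e S' := fun I hI =>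
      Finset.insert_subset_insert _ hI
    have heI : ∀ I : Finset (Fin n), I ⊆ S' → e ∉ I := fun I hI h => he (hI h)
    -- upper bounds on α
    have hαub : ∀ I, I ⊆ S' → α ≤ z (insert e I) - p I := by
      intro I hI
      apply max_le
      · -- p {e} + p I ≤ p (insert e I)
        have h1 := hsup {e} I (by simp) (hIS I hI)
        have h2 : ({e} : Finset (Fin n)) ∪ I = insert e I := by
          rw [Finset.insert_eq]
        have h3 : ({e} : Finset (Fin n)) ∩ I = ∅ := by
          rw [Finset.singleton_inter_of_notMem (heI I hI)]
        rw [h2, h3] at h1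
        have h4 := hpz (insert e I) (hIeS I hI)
        linarith
      · rw [Finset.sup'_le_iff]
        intro J hJ
        rw [Finset.mem_powerset] at hJ
        -- p (insert e J) + p I ≤ p (insert e (I ∪ J)) + p (I ∩ J) ≤ z (insert e (I ∪ J)) + z (I ∩ J)
        --   ≤ z (insert e I) + z J
        have h1 := hsup (insert e J) I (hIeS J hJ) (hIS I hI)
        have e1 : insert e J ∪ I = insert e (I ∪ J) := by
          rw [Finset.insert_union, Finset.union_comm]
        have e2 : insert e J ∩ I = J ∩ I := by
          rw [Finset.insert_inter_of_notMem (heI I hI)]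
        rw [e1, e2] at h1
        have h2 := hpz (insert e (I ∪ J)) (hIeS _ (Finset.union_subset hI hJ))
        have h3 := hpz (J ∩ I) ((Finset.inter_subset_left).trans (hIS J hJ))
        have h4 := hsub (insert e I) J (hIeS I hI) (hIS J hJ)
        have e3 : insert e I ∪ J = insert e (I ∪ J) := by rw [Finset.insert_union]
        have e4 : insert e I ∩ J = I ∩ J := by
          rw [Finset.insert_inter_of_notMem (heI J hJ)]
        rw [e3, e4] at h4
        have e5 : J ∩ I = I ∩ J := Finset.inter_comm _ _
        rw [e5] at h1 h3
        linarith
    have hαe : α ≤ z {e} := by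
      apply max_le (hpz {e} (by simp))
      rw [Finset.sup'_le_iff]
      intro J hJ
      rw [Finset.mem_powerset] at hJ
      have h1 := hpz (insert e J) (hIeS J hJ)
      have h2 := hsub {e} J (by simp) (hIS J hJ)
      have e1 : ({e} : Finset (Fin n)) ∪ J = insert e J := by rw [Finset.insert_eq]
      have e2 : ({e} : Finset (Fin n)) ∩ J = ∅ := by
        rw [Finset.singleton_inter_of_notMem (heI J hJ)]
      rw [e1, e2] at h2
      linarith
    -- reduced functions
    set z₁ : Finset (Fin n) → ℝ := fun I => min (z I) (z (insert e I) - α) with hz₁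
    set p₁ : Finset (Fin n) → ℝ := fun I => max (p I) (p (insert e I) - α) with hp₁
    have hz₁sub : ∀ I J, I ⊆ S' → J ⊆ S' → z₁ (I ∪ J) + z₁ (I ∩ J) ≤ z₁ I + z₁ J := by
      intro I J hI hJ
      have hIJu : I ∪ J ⊆ S' := Finset.union_subset hI hJ
      have hIJi : I ∩ J ⊆ S' := (Finset.inter_subset_left).trans hI
      rcases min_cases (z I) (z (insert e I) - α) with ⟨hzI, _⟩ | ⟨hzI, _⟩ <;>
        rcases min_cases (z J) (z (insert e J) - α) with ⟨hzJ, _⟩ | ⟨hzJ, _⟩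
      · -- both plain
        have h := hsub I J (hIS I hI) (hIS J hJ)
        have h1 : z₁ (I ∪ J) ≤ z (I ∪ J) := min_le_left _ _
        have h2 : z₁ (I ∩ J) ≤ z (I ∩ J) := min_le_left _ _
        simp only [hz₁] at *
        linarith
      · -- I plain, J with e
        have h := hsub I (insert e J) (hIS I hI) (hIeS J hJ)
        have e1 : I ∪ insert e J = insert e (I ∪ J) := by
          rw [Finset.union_insert]
        have e2 : I ∩ insert e J = I ∩ J := by
          rw [Finset.inter_insert_of_notMem (heI I hI)]
        rw [e1, e2] at h
        have h1 : z₁ (I ∪ J) ≤ z (insert e (I ∪ J)) - α := min_le_right _ _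
        have h2 : z₁ (I ∩ J) ≤ z (I ∩ J) := min_le_left _ _
        simp only [hz₁] at *
        linarith
      · -- I with e, J plain
        have h := hsub (insert e I) J (hIeS I hI) (hIS J hJ)
        have e1 : insert e I ∪ J = insert e (I ∪ J) := by rw [Finset.insert_union]
        have e2 : insert e I ∩ J = I ∩ J := by
          rw [Finset.insert_inter_of_notMem (heI J hJ)]
        rw [e1, e2] at h
        have h1 : z₁ (I ∪ J) ≤ z (insert e (I ∪ J)) - α := min_le_right _ _
        have h2 : z₁ (I ∩ J) ≤ z (I ∩ J) := min_le_left _ _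
        simp only [hz₁] at *
        linarith
      · -- both with e
        have h := hsub (insert e I) (insert e J) (hIeS I hI) (hIeS J hJ)
        have e1 : insert e I ∪ insert e J = insert e (I ∪ J) := by
          rw [Finset.insert_union, Finset.union_insert, Finset.insert_idem]
        have e2 : insert e I ∩ insert e J = insert e (I ∩ J) := by
          rw [Finset.insert_inter_distrib]
        rw [e1, e2] at h
        have h1 : z₁ (I ∪ J) ≤ z (insert e (I ∪ J)) - α := min_le_right _ _
        have h2 : z₁ (I ∩ J) ≤ z (insert e (I ∩ J)) - α := min_le_right _ _
        simp only [hz₁] at *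
        linarith
    have hp₁sup : ∀ I J, I ⊆ S' → J ⊆ S' → p₁ I + p₁ J ≤ p₁ (I ∪ J) + p₁ (I ∩ J) := by
      intro I J hI hJ
      rcases max_cases (p I) (p (insert e I) - α) with ⟨hpI, _⟩ | ⟨hpI, _⟩ <;>
        rcases max_cases (p J) (p (insert e J) - α) with ⟨hpJ, _⟩ | ⟨hpJ, _⟩
      · have h := hsup I J (hIS I hI) (hIS J hJ)
        have h1 : p (I ∪ J) ≤ p₁ (I ∪ J) := le_max_left _ _
        have h2 : p (I ∩ J) ≤ p₁ (I ∩ J) := le_max_left _ _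
        simp only [hp₁] at *
        linarith
      · have h := hsup I (insert e J) (hIS I hI) (hIeS J hJ)
        have e1 : I ∪ insert e J = insert e (I ∪ J) := by rw [Finset.union_insert]
        have e2 : I ∩ insert e J = I ∩ J := by
          rw [Finset.inter_insert_of_notMem (heI I hI)]
        rw [e1, e2] at h
        have h1 : p (insert e (I ∪ J)) - α ≤ p₁ (I ∪ J) := le_max_right _ _
        have h2 : p (I ∩ J) ≤ p₁ (I ∩ J) := le_max_left _ _
        simp only [hp₁] at *
        linarith
      · have h := hsup (insert e I) J (hIeS I hI) (hIS J hJ)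
        have e1 : insert e I ∪ J = insert e (I ∪ J) := by rw [Finset.insert_union]
        have e2 : insert e I ∩ J = I ∩ J := by
          rw [Finset.insert_inter_of_notMem (heI J hJ)]
        rw [e1, e2] at h
        have h1 : p (insert e (I ∪ J)) - α ≤ p₁ (I ∪ J) := le_max_right _ _
        have h2 : p (I ∩ J) ≤ p₁ (I ∩ J) := le_max_left _ _
        simp only [hp₁] at *
        linarith
      · have h := hsup (insert e I) (insert e J) (hIeS I hI) (hIeS J hJ)
        have e1 : insert e I ∪ insert e J = insert e (I ∪ J) := by
          rw [Finset.insert_union, Finset.union_insert, Finset.insert_idem]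
        have e2 : insert e I ∩ insert e J = insert e (I ∩ J) := by
          rw [Finset.insert_inter_distrib]
        rw [e1, e2] at h
        have h1 : p (insert e (I ∪ J)) - α ≤ p₁ (I ∪ J) := le_max_right _ _
        have h2 : p (insert e (I ∩ J)) - α ≤ p₁ (I ∩ J) := le_max_right _ _
        simp only [hp₁] at *
        linarith
    have hp₁z₁ : ∀ I, I ⊆ S' → p₁ I ≤ z₁ I := by
      intro I hI
      apply max_le <;> apply le_min
      · exact hpz I (hIS I hI)
      · have := hαub I hI; linarith
      · have := hαlb2 I hI; linarith
      · have := hpz (insert e I) (hIeS I hI); linarith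
    have hp₁0 : p₁ ∅ ≤ 0 := by
      apply max_le hp0
      have : p (insert e ∅) = p {e} := by simp
      rw [this]; linarith
    have hz₁0 : 0 ≤ z₁ ∅ := by
      apply le_min hz0
      have : z (insert e ∅) = z {e} := by simp
      rw [this]; linarith
    obtain ⟨v, hv⟩ := ih z₁ p₁ hz₁sub hp₁sup hp₁z₁ hp₁0 hz₁0
    refine ⟨fun i => if i = e then α else v i, ?_⟩
    intro I hI
    by_cases heI' : e ∈ I
    · obtain ⟨J, hJe, rfl⟩ : ∃ J, e ∉ J ∧ I = insert e J :=
        ⟨I.erase e, Finset.notMem_erase _ _, (Finset.insert_erase heI').symm⟩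
      have hJ : J ⊆ S' := by
        intro i hi
        rcases Finset.mem_insert.1 (hI (Finset.mem_insert_of_mem hi)) with h | h
        · exact absurd (h ▸ hi) hJe
        · exact h
      have hsum : ∑ i ∈ insert e J, (if i = e then α else v i) = α + ∑ i ∈ J, v i := by
        rw [Finset.sum_insert hJe]
        simp only [if_pos rfl]
        congr 1
        apply Finset.sum_congr rfl
        intro i hi
        exact if_neg (fun h : i = e => hJe (h ▸ hi))
      obtain ⟨h1, h2⟩ := hv J hJ
      have hl : p (insert e J) - α ≤ p₁ J := le_max_right _ _
      have hr : z₁ J ≤ z (insert e J) - α := min_le_right _ _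
      constructor
      · rw [hsum]; linarith
      · rw [hsum]; linarith
    · have hIS' : I ⊆ S' := by
        intro i hi
        rcases Finset.mem_insert.1 (hI hi) with h | h
        · exact absurd (h ▸ hi) heI'
        · exact h
      have hsum : ∑ i ∈ I, (if i = e then α else v i) = ∑ i ∈ I, v i := by
        apply Finset.sum_congr rfl
        intro i hi
        exact if_neg (fun h : i = e => heI' (h ▸ hi))
      obtain ⟨h1, h2⟩ := hv I hIS'
      have hl : p I ≤ p₁ I := le_max_left _ _
      have hr : z₁ I ≤ z I := min_le_left _ _
      rw [hsum]
      exact ⟨le_trans hl h1, le_trans h2 hr⟩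
theorem stmt0 {n : ℕ} (z z' : Finset (Fin n) → ℝ)
    (hz : Submodular z) (hz' : Submodular z') :
    GenPerm z + GenPerm z' = GenPerm (fun I => z I + z' I) := by
  apply Set.Subset.antisymm
  · rintro x ⟨a, ha, b, hb, rfl⟩
    constructor
    · intro I hI
      have h1 := ha.1 I hI
      have h2 := hb.1 I hI
      have hsum : ∑ i ∈ I, (a + b) i = ∑ i ∈ I, a i + ∑ i ∈ I, b i := by
        rw [← Finset.sum_add_distrib]; rfl
      rw [hsum]; exact add_le_add h1 h2
    · have hsum : ∑ i, (a + b) i = ∑ i, a i + ∑ i, b i := by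
        rw [← Finset.sum_add_distrib]; rfl
      rw [hsum, ha.2, hb.2]
  · intro t ht
    obtain ⟨ht1, ht2⟩ := ht
    have ht2' : ∑ i, t i = z univ + z' univ := ht2
    have htle : ∀ I : Finset (Fin n), ∑ i ∈ I, t i ≤ z I + z' I := by
      intro I
      by_cases hI : I = univ
      · subst hI; exact le_of_eq ht2
      · exact ht1 I hI
    set p : Finset (Fin n) → ℝ := fun I => (∑ i ∈ I, t i) - z' I with hp
    obtain ⟨u, hu⟩ := frank_sep Finset.univ z p
      (fun I J _ _ => hz.2 I J)
      (by
        intro I J _ _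
        have hs := hz'.2 I J
        have hm : ∑ i ∈ I ∪ J, t i + ∑ i ∈ I ∩ J, t i = ∑ i ∈ I, t i + ∑ i ∈ J, t i :=
          Finset.sum_union_inter
        simp only [hp]
        linarith)
      (fun I _ => by simp only [hp]; linarith [htle I])
      (by simp [hp, hz'.1])
      (le_of_eq hz.1.symm)
    have husum : ∑ i, u i = z univ := by
      refine le_antisymm (hu univ (subset_refl _)).2 ?_
      have h := (hu univ (subset_refl _)).1
      simp only [hp] at h
      linarith [ht2']
    refine ⟨u, ⟨fun I _ => (hu I (Finset.subset_univ I)).2, husum⟩,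
      fun i => t i - u i, ⟨?_, ?_⟩, ?_⟩
    · intro I _
      have h := (hu I (Finset.subset_univ I)).1
      simp only [hp] at h
      rw [Finset.sum_sub_distrib]
      linarith
    · rw [Finset.sum_sub_distrib, husum]
      linarith [ht2']
    · funext i; simp
end

section
/- If P(z) and P(z') are integral generalized permutahedra in ℝ^n (all vertices are lattice points), then every lattice point of the Minkowski sum P(z)+P(z') is a sum of a lattice point of P(z) and a lattice point of P(z'): (P(z) ∩ ℤ^n) + (P(z') ∩ ℤ^n) = (P(z)+P(z')) ∩ ℤ^n. -/
open Finset
open scoped Pointwise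

/-- The lattice points of `ℝ^n`. -/
def LatticePts (n : ℕ) : Set (Fin n → ℝ) :=
  {t | ∀ i, ∃ m : ℤ, t i = m}

/-!
Write `t = p + q` with `p ∈ P(z)`, `q ∈ P(z')`. Splitting `t` as `y + (t - y)` with both summands
in the permutahedra means exactly that `y` lies in the sandwich polytope
`a(I) ≤ y(I) ≤ z(I)`, `a(I) = t(I) - z'(I)`, with `z` submodular and `a` supermodular, and `p` is
such a point. Take an extreme point `y`. The sets on which the upper (resp. lower) bound is tight
form a lattice of sets, so the atoms of each lattice partition the ground set into blocks with
integral `y`-sums. If `y` had a fractional coordinate, every block meeting the fractional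
coordinates would contain at least two of them; a dimension count then yields a nonzero direction
preserving all block sums, hence all tight constraints, contradicting extremality.
-/

open Module Topology

section FiberSums

variable {ι κ : Type*} [Fintype ι] [DecidableEq κ]

lemma two_mul_card_image_le (α : ι → κ) (hα : ∀ i, ∃ j ≠ i, α j = α i) :
    2 * #(univ.image α) ≤ Fintype.card ι := by
  rw [← card_univ, card_eq_sum_card_image α univ, mul_comm, ← smul_eq_mul, ← sum_const]
  refine sum_le_sum fun c hc => ?_
  obtain ⟨i, -, rfl⟩ := mem_image.1 hc
  obtain ⟨j, hji, hj⟩ := hα i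
  exact one_lt_card.2 ⟨i, by simp, j, by simp [hj], hji.symm⟩

lemma sum_eq_zero_of_forall_sum_fiber_eq_zero {M : Type*} [AddCommMonoid M] {α : ι → κ}
    {d : ι → M} (hd : ∀ c, ∑ i with α i = c, d i = 0) {S : Finset ι}
    (hS : ∀ i ∈ S, ∀ j, α j = α i → j ∈ S) :
    ∑ i ∈ S, d i = 0 := by
  rw [← sum_image' (s := S) (g := α) (f := fun _ => (0 : M)) d fun i hi => ?_, sum_const_zero]
  rw [← hd (α i)]
  congr 1
  ext j
  simpa using hS i hi j

end FiberSums

theorem exists_ne_zero_forall_sum_fiber_eq_zero {K ι κ₁ κ₂ : Type*} [Field K] [Fintype ι]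
    [Nonempty ι] [DecidableEq κ₁] [DecidableEq κ₂] (α : ι → κ₁) (β : ι → κ₂)
    (hα : ∀ i, ∃ j ≠ i, α j = α i) (hβ : ∀ i, ∃ j ≠ i, β j = β i) :
    ∃ d : ι → K, d ≠ 0 ∧ (∀ c, ∑ i with α i = c, d i = 0) ∧ ∀ c, ∑ i with β i = c, d i = 0 := by
  set c₀ := β (Classical.arbitrary ι)
  have hc₀ : c₀ ∈ univ.image β := mem_image_of_mem _ (mem_univ _)
  -- The fibre of `c₀` is left out: its sum is forced by the others, as both families of fibres
  -- partition `ι`.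
  let L : (ι → K) →ₗ[K] (univ.image α → K) × ((univ.image β).erase c₀ → K) :=
    (LinearMap.pi fun c : univ.image α => ∑ i with α i = c, LinearMap.proj i).prod
      (LinearMap.pi fun c : (univ.image β).erase c₀ => ∑ i with β i = c, LinearMap.proj i)
  have hdim : finrank K ((univ.image α → K) × ((univ.image β).erase c₀ → K)) <
      finrank K (ι → K) := by
    simp only [Module.finrank_prod, Module.finrank_fintype_fun_eq_card, Fintype.card_coe,
      card_erase_of_mem hc₀]
    have := two_mul_card_image_le α hα
    have := two_mul_card_image_le β hβ
    have := card_pos.2 ⟨_, hc₀⟩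
    omega
  obtain ⟨d, hdL, hd0⟩ := (Submodule.ne_bot_iff _).1 (L.ker_ne_bot_of_finrank_lt hdim)
  have hdα : ∀ c, ∑ i with α i = c, d i = 0 := by
    intro c
    by_cases hc : c ∈ univ.image α
    · simpa [L] using congrFun (congrArg Prod.fst hdL) ⟨c, hc⟩
    · exact sum_eq_zero fun i hi =>
        (hc ((mem_filter.1 hi).2 ▸ mem_image_of_mem α (mem_univ i))).elim
  have hdβ : ∀ c ≠ c₀, ∑ i with β i = c, d i = 0 := by
    intro c hcc₀
    by_cases hc : c ∈ univ.image β
    · simpa [L] using congrFun (congrArg Prod.snd hdL) ⟨c, mem_erase.2 ⟨hcc₀, hc⟩⟩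
    · exact sum_eq_zero fun i hi =>
        (hc ((mem_filter.1 hi).2 ▸ mem_image_of_mem β (mem_univ i))).elim
  refine ⟨d, hd0, hdα, fun c => ?_⟩
  obtain rfl | hc := eq_or_ne c c₀
  · have htotal :=
      (sum_fiberwise_of_maps_to (s := univ) (fun i _ => mem_image_of_mem β (mem_univ i)) d).trans
        (sum_fiberwise_of_maps_to (s := univ) (fun i _ => mem_image_of_mem α (mem_univ i)) d).symm
    rwa [← add_sum_erase _ _ hc₀, sum_eq_zero fun c hc => hdβ c (ne_of_mem_erase hc),
      sum_eq_zero fun c _ => hdα c, add_zero] at htotal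
  · exact hdβ c hc

section Integrality

variable {ι : Type*} [Fintype ι] [DecidableEq ι] {Λ : AddSubgroup ℝ} {x : ι → ℝ}

/-- The atom of `i` in the Boolean algebra generated by a sublattice `F` is `A \ U`, where `A` is
the least member of `F` containing `i` and `U` the largest one avoiding it; since `A`, `U` and
`A ∩ U` lie in `F`, the sum of `x` over an atom lies in `Λ`. -/
lemma exists_ne_notMem_forall_mem_iff {F : Set (Finset ι)} (hF : IsSublattice F) (hbot : ∅ ∈ F)
    (htop : univ ∈ F) (hx : ∀ I ∈ F, ∑ i ∈ I, x i ∈ Λ) {i : ι} (hi : x i ∉ Λ) :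
    ∃ j ≠ i, x j ∉ Λ ∧ ∀ I ∈ F, (i ∈ I ↔ j ∈ I) := by
  classical
  set A := (univ.filter fun I => I ∈ F ∧ i ∈ I).inf id
  set U := (univ.filter fun I => I ∈ F ∧ i ∉ I).sup id
  have hA : A ∈ F := inf_induction htop (fun _ h₁ _ h₂ => hF.infClosed h₁ h₂)
    fun I hI => (mem_filter.1 hI).2.1
  have hU : U ∈ F := sup_induction hbot (fun _ h₁ _ h₂ => hF.supClosed h₁ h₂)
    fun I hI => (mem_filter.1 hI).2.1
  have hatom : ∀ j ∈ A \ U, ∀ I ∈ F, (i ∈ I ↔ j ∈ I) := by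
    intro j hj I hI
    simp only [A, U, mem_sdiff, mem_inf, mem_sup, mem_filter, mem_univ, true_and, id] at hj
    exact ⟨fun hiI => hj.1 I ⟨hI, hiI⟩, fun hjI => by_contra fun hiI => hj.2 ⟨I, ⟨hI, hiI⟩, hjI⟩⟩
  have hiAU : i ∈ A \ U := by
    simp only [A, U, mem_sdiff, mem_inf, mem_sup, mem_filter, mem_univ, true_and, id]
    exact ⟨fun I hI => hI.2, fun ⟨I, hI, hiI⟩ => hI.2 hiI⟩
  have hsum : ∑ j ∈ A \ U, x j ∈ Λ := by
    rw [← sdiff_inter_self_left, sum_sdiff_eq_sub inter_subset_left]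
    exact sub_mem (hx A hA) (hx _ (hF.infClosed hA hU))
  by_contra hall
  refine hi ?_
  rw [← add_sum_erase _ _ hiAU] at hsum
  refine (add_mem_cancel_right (sum_mem fun j hj => ?_)).1 hsum
  obtain ⟨hji, hj⟩ := mem_erase.1 hj
  by_contra hxj
  exact hall ⟨j, hji, hxj, hatom j hj⟩

theorem apply_mem_of_isSublattice {F G : Set (Finset ι)} (hF : IsSublattice F)
    (hG : IsSublattice G) (hFbot : ∅ ∈ F) (hGbot : ∅ ∈ G) (hFtop : univ ∈ F) (hGtop : univ ∈ G)
    (hxF : ∀ I ∈ F, ∑ i ∈ I, x i ∈ Λ) (hxG : ∀ I ∈ G, ∑ i ∈ I, x i ∈ Λ)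
    (hrigid : ∀ d : ι → ℝ, (∀ I ∈ F, ∑ i ∈ I, d i = 0) → (∀ I ∈ G, ∑ i ∈ I, d i = 0) → d = 0)
    (i : ι) : x i ∈ Λ := by
  classical
  by_contra hi
  have : Nonempty {j // x j ∉ Λ} := ⟨⟨i, hi⟩⟩
  let pattern (F : Set (Finset ι)) (j : {j // x j ∉ Λ}) : Set (Finset ι) := {I | I ∈ F ∧ ↑j ∈ I}
  have hfibre : ∀ F, IsSublattice F → ∅ ∈ F → univ ∈ F → (∀ I ∈ F, ∑ i ∈ I, x i ∈ Λ) →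
      ∀ j, ∃ k ≠ j, pattern F k = pattern F j := by
    intro F hF hbot htop hx j
    obtain ⟨k, hkj, hk, hjk⟩ := exists_ne_notMem_forall_mem_iff hF hbot htop hx j.2
    refine ⟨⟨k, hk⟩, fun h => hkj (congrArg Subtype.val h), ?_⟩
    ext I
    exact and_congr_right fun hI => (hjk I hI).symm
  obtain ⟨d, hd0, hdF, hdG⟩ := exists_ne_zero_forall_sum_fiber_eq_zero (K := ℝ)
    (pattern F) (pattern G) (hfibre F hF hFbot hFtop hxF) (hfibre G hG hGbot hGtop hxG)
  let d' : ι → ℝ := Function.extend Subtype.val d 0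
  have hd' : ∀ j : {j // x j ∉ Λ}, d' j = d j := Subtype.val_injective.extend_apply d 0
  have hsum : ∀ F : Set (Finset ι), (∀ c, ∑ j with pattern F j = c, d j = 0) →
      ∀ I ∈ F, ∑ i ∈ I, d' i = 0 := by
    intro F hdF I hI
    have hsupp : ∀ i ∈ I, d' i ≠ 0 → x i ∉ Λ := fun i _ hdi hxi =>
      hdi (Function.extend_apply' _ _ _ fun ⟨j, hj⟩ => j.2 (hj ▸ hxi))
    rw [← sum_filter_of_ne hsupp, ← sum_subtype_eq_sum_filter]
    simp only [hd']
    refine sum_eq_zero_of_forall_sum_fiber_eq_zero hdF fun j hj k hkj => ?_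
    have : I ∈ pattern F k := hkj ▸ ⟨hI, mem_subtype.1 hj⟩
    exact mem_subtype.2 this.2
  refine hd0 (funext fun j => ?_)
  rw [← hd', hrigid d' (hsum F hdF) (hsum G hdG)]
  rfl

end Integrality

section Sandwich

variable {ι : Type*} {a b : Finset ι → ℝ}

def sandwich (a b : Finset ι → ℝ) : Set (ι → ℝ) :=
  {x | ∀ I, a I ≤ ∑ i ∈ I, x i ∧ ∑ i ∈ I, x i ≤ b I}

lemma isCompact_sandwich : IsCompact (sandwich a b) := by
  have hclosed : IsClosed (sandwich a b) := by
    simp only [sandwich, Set.ofPred_forall, Set.ofPred_and]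
    exact isClosed_iInter fun I => (isClosed_le continuous_const (by fun_prop)).inter
      (isClosed_le (by fun_prop) continuous_const)
  refine (isCompact_univ_pi fun i => isCompact_Icc (a := a {i}) (b := b {i})).of_isClosed_subset
    hclosed fun x hx i _ => ?_
  simpa using hx {i}

lemma eventually_add_smul_mem_sandwich [Finite ι] {x d : ι → ℝ} (hx : x ∈ sandwich a b)
    (hd : ∀ I, (∑ i ∈ I, x i = a I ∨ ∑ i ∈ I, x i = b I) → ∑ i ∈ I, d i = 0) :
    ∀ᶠ ε in 𝓝 (0 : ℝ), x + ε • d ∈ sandwich a b := by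
  simp only [sandwich, Set.mem_ofPred_eq, Pi.add_apply, Pi.smul_apply, smul_eq_mul,
    sum_add_distrib, ← mul_sum]
  refine Filter.eventually_all.2 fun I => ?_
  by_cases hI : ∑ i ∈ I, d i = 0
  · simpa [hI] using hx I
  have hslack : ∑ i ∈ I, x i ∈ Set.Ioo (a I) (b I) :=
    ⟨(hx I).1.lt_of_ne fun h => hI (hd I (.inl h.symm)),
      (hx I).2.lt_of_ne fun h => hI (hd I (.inr h))⟩
  have hlim : Filter.Tendsto (fun ε : ℝ => ∑ i ∈ I, x i + ε * ∑ i ∈ I, d i) (𝓝 0)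
      (𝓝 (∑ i ∈ I, x i)) := by
    simpa using (by fun_prop : Continuous fun ε : ℝ => ∑ i ∈ I, x i + ε * ∑ i ∈ I, d i).tendsto 0
  filter_upwards [hlim.eventually_mem (Ioo_mem_nhds hslack.1 hslack.2)] with ε hε
    using ⟨hε.1.le, hε.2.le⟩

lemma eq_zero_of_mem_extremePoints_sandwich [Finite ι] {x d : ι → ℝ}
    (hx : x ∈ (sandwich a b).extremePoints ℝ)
    (hd : ∀ I, (∑ i ∈ I, x i = a I ∨ ∑ i ∈ I, x i = b I) → ∑ i ∈ I, d i = 0) : d = 0 := by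
  have hnear := eventually_add_smul_mem_sandwich hx.1 hd
  have hneg : ∀ᶠ ε in 𝓝 (0 : ℝ), x + (-ε) • d ∈ sandwich a b :=
    (continuous_neg.tendsto' 0 0 neg_zero).eventually hnear
  obtain ⟨ε, ⟨hplus, hminus⟩, hε⟩ := ((hnear.and hneg).filter_mono nhdsWithin_le_nhds).and
    (self_mem_nhdsWithin (s := Set.Ioi (0 : ℝ))) |>.exists
  have hmid : x ∈ openSegment ℝ (x + ε • d) (x + (-ε) • d) :=
    ⟨1 / 2, 1 / 2, by norm_num, by norm_num, by norm_num, by ext; simp; ring⟩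
  have := hx.2 hplus hminus hmid
  rw [add_eq_left, smul_eq_zero] at this
  exact this.resolve_left (ne_of_gt hε)

lemma isSublattice_setOf_sum_eq [DecidableEq ι] {x : ι → ℝ}
    (hb : ∀ I J, b (I ∪ J) + b (I ∩ J) ≤ b I + b J) (hx : ∀ I, ∑ i ∈ I, x i ≤ b I) :
    IsSublattice {I | ∑ i ∈ I, x i = b I} := by
  have htight : ∀ I J, ∑ i ∈ I, x i = b I → ∑ i ∈ J, x i = b J →
      ∑ i ∈ I ∪ J, x i = b (I ∪ J) ∧ ∑ i ∈ I ∩ J, x i = b (I ∩ J) := by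
    intro I J hI hJ
    have := sum_union_inter (s₁ := I) (s₂ := J) (f := x)
    have := hb I J
    have := hx (I ∪ J)
    have := hx (I ∩ J)
    constructor <;> linarith
  exact ⟨fun I hI J hJ => (htight I J hI hJ).1, fun I hI J hJ => (htight I J hI hJ).2⟩

theorem exists_mem_sandwich_forall_apply_mem [Fintype ι] [DecidableEq ι] {Λ : AddSubgroup ℝ}
    (hb : ∀ I J, b (I ∪ J) + b (I ∩ J) ≤ b I + b J) (ha : ∀ I J, a I + a J ≤ a (I ∪ J) + a (I ∩ J))
    (hb₀ : b ∅ = 0) (ha₀ : a ∅ = 0) (hab : a univ = b univ) (hbΛ : ∀ I, b I ∈ Λ)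
    (haΛ : ∀ I, a I ∈ Λ) (hne : (sandwich a b).Nonempty) :
    ∃ y ∈ sandwich a b, ∀ i, y i ∈ Λ := by
  obtain ⟨x, hx⟩ := isCompact_sandwich.extremePoints_nonempty hne
  have hxS := hx.1
  refine ⟨x, hxS, apply_mem_of_isSublattice (F := {I | ∑ i ∈ I, x i = b I})
    (G := {I | ∑ i ∈ I, x i = a I}) (isSublattice_setOf_sum_eq hb fun I => (hxS I).2) ?_
    (by simp [hb₀]) (by simp [ha₀]) (le_antisymm (hxS univ).2 (hab ▸ (hxS univ).1))
    (le_antisymm (hab ▸ (hxS univ).2) (hxS univ).1) (fun I hI => hI ▸ hbΛ I)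
    (fun I hI => hI ▸ haΛ I) fun d hdF hdG => eq_zero_of_mem_extremePoints_sandwich hx
      fun I hI => hI.elim (hdG I) (hdF I)⟩
  -- The tight sets of the supermodular lower bound `a` are those of the submodular `-a`.
  simpa [sum_neg_distrib] using isSublattice_setOf_sum_eq (b := -a) (x := -x)
    (fun I J => by simp only [Pi.neg_apply]; linarith [ha I J])
    fun I => by simpa [sum_neg_distrib] using (hxS I).1

end Sandwich

section GeneralizedPermutahedra

variable {n : ℕ}

lemma mem_zmultiples_one_iff {r : ℝ} : r ∈ AddSubgroup.zmultiples 1 ↔ ∃ m : ℤ, r = m := by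
  simp [AddSubgroup.mem_zmultiples_iff, eq_comm]

lemma mem_latticePts_iff {t : Fin n → ℝ} :
    t ∈ LatticePts n ↔ ∀ i, t i ∈ AddSubgroup.zmultiples 1 := by
  simp only [LatticePts, Set.mem_ofPred_eq, mem_zmultiples_one_iff]

lemma mem_genPerm_iff {z : Finset (Fin n) → ℝ} {t : Fin n → ℝ} :
    t ∈ GenPerm z ↔ (∀ I, ∑ i ∈ I, t i ≤ z I) ∧ ∑ i, t i = z univ :=
  ⟨fun h => ⟨fun I => if hI : I = univ then hI ▸ h.2.le else h.1 I hI, h.2⟩,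
    fun h => ⟨fun I _ => h.1 I, h.2⟩⟩

lemma mem_genPerm_and_sub_mem_genPerm_iff {z z' : Finset (Fin n) → ℝ} {t y : Fin n → ℝ}
    (ht : ∑ i, t i = z univ + z' univ) :
    y ∈ GenPerm z ∧ t - y ∈ GenPerm z' ↔ y ∈ sandwich (fun I => ∑ i ∈ I, t i - z' I) z := by
  simp only [mem_genPerm_iff, sandwich, Set.mem_ofPred_eq, Pi.sub_apply, sum_sub_distrib]
  constructor
  · rintro ⟨⟨hy, -⟩, hty, -⟩
    exact fun I => ⟨by linarith [hty I], hy I⟩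
  · intro h
    have hy : ∑ i, y i = z univ := le_antisymm (h univ).2 (by linarith [(h univ).1])
    exact ⟨⟨fun I => (h I).2, hy⟩, fun I => by linarith [(h I).1], by linarith⟩

end GeneralizedPermutahedra

theorem stmt3 {n : ℕ} (z z' : Finset (Fin n) → ℝ)
    (hz : Submodular z) (hz' : Submodular z')
    (hzint : ∀ I, ∃ m : ℤ, z I = m) (hz'int : ∀ I, ∃ m : ℤ, z' I = m) :
    (GenPerm z ∩ LatticePts n) + (GenPerm z' ∩ LatticePts n)
      = (GenPerm z + GenPerm z') ∩ LatticePts n := by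
  ext t
  simp only [Set.mem_inter_iff]
  constructor
  · rintro ⟨p, ⟨hp, hpℤ⟩, q, ⟨hq, hqℤ⟩, rfl⟩
    exact ⟨Set.add_mem_add hp hq, mem_latticePts_iff.2 fun i =>
      add_mem (mem_latticePts_iff.1 hpℤ i) (mem_latticePts_iff.1 hqℤ i)⟩
  · rintro ⟨⟨p, hp, q, hq, rfl⟩, htℤ⟩
    rw [mem_latticePts_iff] at htℤ
    have ht : ∑ i, (p + q) i = z univ + z' univ := by simp [sum_add_distrib, hp.2, hq.2]
    obtain ⟨y, hy, hyℤ⟩ := exists_mem_sandwich_forall_apply_mem hz.2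
      (fun I J => by linarith [sum_union_inter (s₁ := I) (s₂ := J) (f := p + q), hz'.2 I J])
      hz.1 (by simp [hz'.1]) (by simp only; linarith)
      (fun I => mem_zmultiples_one_iff.2 (hzint I))
      (fun I => sub_mem (sum_mem fun i _ => htℤ i) (mem_zmultiples_one_iff.2 (hz'int I)))
      ⟨p, (mem_genPerm_and_sub_mem_genPerm_iff ht).1 ⟨hp, by simpa using hq⟩⟩
    obtain ⟨hyP, htyP⟩ := (mem_genPerm_and_sub_mem_genPerm_iff ht).2 hy
    exact ⟨y, ⟨hyP, mem_latticePts_iff.2 hyℤ⟩, p + q - y,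
      ⟨htyP, mem_latticePts_iff.2 fun i => sub_mem (htℤ i) (hyℤ i)⟩,
      add_sub_cancel _ _⟩
end

section
/- Let f, g be polynomials in ℝ≥0[x_1,...,x_n] (nonnegative coefficients) such that f and g both have saturated Newton polytope and both Newton(f), Newton(g) are generalized permutahedra. Then Newton(fg) = Newton(f) + Newton(g) is a generalized permutahedron and fg has saturated Newton polytope. -/
open Finset MvPolynomial
open scoped Pointwise

/-- A set is a generalized permutahedron if it is `P(z)` for some submodular `z`. -/
def IsGenPerm {n : ℕ} (S : Set (Fin n → ℝ)) : Prop :=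
  ∃ z : Finset (Fin n) → ℝ, Submodular z ∧ S = GenPerm z

/-- The support of a polynomial, as a set of points of `ℝ^n` (exponent vectors). -/
def supportPts {n : ℕ} (f : MvPolynomial (Fin n) ℝ) : Set (Fin n → ℝ) :=
  (fun d : Fin n →₀ ℕ => fun i => (d i : ℝ)) '' (f.support : Set (Fin n →₀ ℕ))

/-- The Newton polytope of a polynomial: the convex hull of its support. -/
def newton {n : ℕ} (f : MvPolynomial (Fin n) ℝ) : Set (Fin n → ℝ) :=
  convexHull ℝ (supportPts f)

/-- `f` has saturated Newton polytope: every lattice point of `newton f` is an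
exponent vector of `f`. -/
def SNP {n : ℕ} (f : MvPolynomial (Fin n) ℝ) : Prop :=
  ∀ α : Fin n → ℤ, (fun i => (α i : ℝ)) ∈ newton f →
    ∃ d ∈ f.support, ∀ i, ((d i : ℤ) = α i)

/-!
Nonnegative coefficients cannot cancel, so `supp (f * g) = supp f + supp g` and the Newton
polytope of `f * g` is the Minkowski sum. For submodular `z₁, z₂`, a point `t` of
`P(z₁ + z₂)` splits as `t₁ + t₂` with `tₖ ∈ P(zₖ)` coordinate by coordinate: give `t₁` its
largest admissible last coordinate `a`; the slice `t₁ (last) = a` of `P(z₁)` is again a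
generalized permutahedron, with set function a pointwise minimum of values of `z₁` shifted
by `a`, and likewise for `z₂`, so one recurses in one dimension less. Every number produced
is an integer when `z₁`, `z₂` and `t` are integral. They are for lattice polytopes, since each
inequality of `P(z)` is tight somewhere on `P(z)`, hence at one of the lattice points spanning
it. A lattice point of `Newton(f) + Newton(g)` is thus a sum of lattice points of `Newton(f)`
and `Newton(g)`, which are exponents of `f` and `g` by saturation.
-/

namespace Finset

variable {n : ℕ}

def castSucc (J : Finset (Fin n)) : Finset (Fin (n + 1)) := J.map Fin.castSuccEmb

@[simp] lemma castSucc_mem_castSucc {J : Finset (Fin n)} {j : Fin n} :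
    j.castSucc ∈ J.castSucc ↔ j ∈ J := by
  simp [castSucc]

lemma last_notMem_castSucc (J : Finset (Fin n)) : Fin.last n ∉ J.castSucc := by
  simp [castSucc, Fin.castSucc_ne_last]

@[simp] lemma castSucc_empty : (∅ : Finset (Fin n)).castSucc = ∅ := rfl

lemma castSucc_union (I J : Finset (Fin n)) : (I ∪ J).castSucc = I.castSucc ∪ J.castSucc :=
  map_union I J

lemma castSucc_inter (I J : Finset (Fin n)) : (I ∩ J).castSucc = I.castSucc ∩ J.castSucc :=
  map_inter I J

lemma insert_last_castSucc_univ : insert (Fin.last n) (univ : Finset (Fin n)).castSucc = univ := by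
  rw [Fin.univ_castSuccEmb, cons_eq_insert, castSucc]

lemma sum_castSucc {M : Type*} [AddCommMonoid M] (J : Finset (Fin n)) (f : Fin (n + 1) → M) :
    ∑ i ∈ J.castSucc, f i = ∑ j ∈ J, f j.castSucc :=
  sum_map J _ f

lemma eq_castSucc_or_eq_insert_last (I : Finset (Fin (n + 1))) :
    ∃ J : Finset (Fin n), I = J.castSucc ∨ I = insert (Fin.last n) J.castSucc := by
  refine ⟨univ.filter (fun j => j.castSucc ∈ I), ?_⟩
  by_cases hI : Fin.last n ∈ I
  · right
    ext i
    cases i using Fin.lastCases <;> simp [hI, Fin.castSucc_ne_last]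
  · left
    ext i
    cases i using Fin.lastCases
    · simp [hI, last_notMem_castSucc]
    · simp

end Finset

lemma sum_snoc_castSucc {n : ℕ} (J : Finset (Fin n)) (y : Fin n → ℝ) (a : ℝ) :
    ∑ i ∈ J.castSucc, (Fin.snoc y a : Fin (n + 1) → ℝ) i = ∑ j ∈ J, y j := by
  simp [Finset.sum_castSucc]

lemma sum_snoc_insert_last_castSucc {n : ℕ} (J : Finset (Fin n)) (y : Fin n → ℝ) (a : ℝ) :
    ∑ i ∈ insert (Fin.last n) J.castSucc, (Fin.snoc y a : Fin (n + 1) → ℝ) i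
      = a + ∑ j ∈ J, y j := by
  rw [Finset.sum_insert (Finset.last_notMem_castSucc J), sum_snoc_castSucc, Fin.snoc_last]

lemma min_submodular {α : Type*} [Lattice α] {u v : α → ℝ}
    (hu : ∀ x y, u (x ⊔ y) + u (x ⊓ y) ≤ u x + u y)
    (hv : ∀ x y, v (x ⊔ y) + v (x ⊓ y) ≤ v x + v y)
    (hvu : ∀ x y, x ≤ y → v y - u y ≤ v x - u x) (x y : α) :
    min (u (x ⊔ y)) (v (x ⊔ y)) + min (u (x ⊓ y)) (v (x ⊓ y))
      ≤ min (u x) (v x) + min (u y) (v y) := by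
  have := hu x y
  have := hv x y
  have := hvu x (x ⊔ y) le_sup_left
  have := hvu y (x ⊔ y) le_sup_right
  have := min_le_left (u (x ⊔ y)) (v (x ⊔ y))
  have := min_le_right (u (x ⊔ y)) (v (x ⊔ y))
  have := min_le_left (u (x ⊓ y)) (v (x ⊓ y))
  have := min_le_right (u (x ⊓ y)) (v (x ⊓ y))
  rcases le_total (u x) (v x) with hx | hx <;> rcases le_total (u y) (v y) with hy | hy <;>
    simp only [min_eq_left, min_eq_right, hx, hy] <;> linarith

section GenPerm

variable {n : ℕ}

lemma Submodular.add {z₁ z₂ : Finset (Fin n) → ℝ} (h₁ : Submodular z₁) (h₂ : Submodular z₂) :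
    Submodular (z₁ + z₂) :=
  ⟨by simp [h₁.1, h₂.1], fun I J => by
    simp only [Pi.add_apply]; linarith [h₁.2 I J, h₂.2 I J]⟩

lemma sum_le_of_mem_genPerm {z : Finset (Fin n) → ℝ} {t : Fin n → ℝ} (ht : t ∈ GenPerm z)
    (I : Finset (Fin n)) : ∑ i ∈ I, t i ≤ z I := by
  by_cases hI : I = univ
  · exact hI ▸ ht.2.le
  · exact ht.1 I hI

lemma mem_genPerm_fin_zero {z : Finset (Fin 0) → ℝ} (hz : Submodular z) (t : Fin 0 → ℝ) :
    t ∈ GenPerm z :=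
  ⟨fun I hI => absurd (Subsingleton.elim I univ) hI, by simp [← hz.1]⟩

lemma genPerm_add_subset (z₁ z₂ : Finset (Fin n) → ℝ) :
    GenPerm z₁ + GenPerm z₂ ⊆ GenPerm (z₁ + z₂) := by
  rintro _ ⟨t₁, ht₁, t₂, ht₂, rfl⟩
  refine ⟨fun I hI => ?_, ?_⟩
  · simp only [Pi.add_apply, sum_add_distrib]
    exact add_le_add (ht₁.1 I hI) (ht₂.1 I hI)
  · simp only [Pi.add_apply, sum_add_distrib, ht₁.2, ht₂.2]

end GenPerm

lemma Submodular.marginal_last_antitone {n : ℕ} {z : Finset (Fin (n + 1)) → ℝ}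
    (hz : Submodular z) {I J : Finset (Fin n)} (hIJ : I ⊆ J) :
    z (insert (Fin.last n) J.castSucc) - z J.castSucc
      ≤ z (insert (Fin.last n) I.castSucc) - z I.castSucc := by
  have := hz.2 (insert (Fin.last n) I.castSucc) J.castSucc
  rw [insert_union, insert_inter_of_notMem (last_notMem_castSucc J), ← castSucc_union,
    ← castSucc_inter, union_eq_right.mpr hIJ, inter_eq_left.mpr hIJ] at this
  linarith

/-- The set function on `Fin n` cutting out the slice `t (Fin.last n) = a` of `GenPerm z`. -/
def contractLast {n : ℕ} (z : Finset (Fin (n + 1)) → ℝ) (a : ℝ) (J : Finset (Fin n)) : ℝ :=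
  min (z J.castSucc) (z (insert (Fin.last n) J.castSucc) - a)

section contractLast

variable {n : ℕ} {z : Finset (Fin (n + 1)) → ℝ} {a : ℝ}

lemma Submodular.contractLast (hz : Submodular z) (ha : a ≤ z {Fin.last n}) :
    Submodular (contractLast z a) := by
  refine ⟨?_, min_submodular (u := fun J : Finset (Fin n) => z J.castSucc)
    (v := fun J : Finset (Fin n) => z (insert (Fin.last n) J.castSucc) - a)
    (fun I J => ?_) (fun I J => ?_) (fun I J hIJ => ?_)⟩
  · simp only [_root_.contractLast, castSucc_empty, hz.1]
    exact min_eq_left (sub_nonneg.mpr ha)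
  · have := hz.2 I.castSucc J.castSucc
    rwa [← castSucc_union, ← castSucc_inter] at this
  · have := hz.2 (insert (Fin.last n) I.castSucc) (insert (Fin.last n) J.castSucc)
    rw [← insert_union_distrib, ← insert_inter_distrib, ← castSucc_union,
      ← castSucc_inter] at this
    simp only [sup_eq_union, inf_eq_inter]
    linarith
  · linarith [hz.marginal_last_antitone hIJ]

lemma contractLast_univ (h : z univ - a ≤ z (univ : Finset (Fin n)).castSucc) :
    contractLast z a univ = z univ - a := by
  rw [contractLast, insert_last_castSucc_univ]
  exact min_eq_right h

lemma contractLast_mem {R : AddSubgroup ℝ} (hz : ∀ I, z I ∈ R) (ha : a ∈ R)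
    (J : Finset (Fin n)) :
    contractLast z a J ∈ R :=
  min_rec' (· ∈ R) (hz _) (R.sub_mem (hz _) ha)

lemma snoc_mem_genPerm {y : Fin n → ℝ} (hy : y ∈ GenPerm (contractLast z a))
    (huniv : contractLast z a univ = z univ - a) :
    (Fin.snoc y a : Fin (n + 1) → ℝ) ∈ GenPerm z := by
  refine ⟨fun I _ => ?_, ?_⟩
  · obtain ⟨J, rfl | rfl⟩ := eq_castSucc_or_eq_insert_last I
    · rw [sum_snoc_castSucc]
      exact (sum_le_of_mem_genPerm hy J).trans (min_le_left _ _)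
    · rw [sum_snoc_insert_last_castSucc]
      linarith [(sum_le_of_mem_genPerm hy J).trans (min_le_right _ _)]
  · rw [Fin.sum_univ_castSucc, Fin.snoc_last]
    simp only [Fin.snoc_castSucc]
    linarith [hy.2]

end contractLast

theorem exists_mem_genPerm_sum_eq {n : ℕ} {z : Finset (Fin n) → ℝ}
    (hz : Submodular z) (I : Finset (Fin n)) : ∃ t ∈ GenPerm z, ∑ i ∈ I, t i = z I := by
  induction n with
  | zero => exact ⟨0, mem_genPerm_fin_zero hz 0, by simp [Subsingleton.elim I ∅, hz.1]⟩
  | succ n ih =>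
    obtain ⟨J, hJ⟩ := eq_castSucc_or_eq_insert_last I
    set a := z (insert (Fin.last n) J.castSucc) - z J.castSucc
    have ha : a ≤ z {Fin.last n} := by
      simpa only [castSucc_empty, insert_empty, hz.1, sub_zero]
        using hz.marginal_last_antitone (empty_subset J)
    have huniv : contractLast z a univ = z univ - a := contractLast_univ <| by
      linarith [insert_last_castSucc_univ (n := n) ▸ hz.marginal_last_antitone (subset_univ J)]
    obtain ⟨y, hy, hyJ⟩ := ih (hz.contractLast ha) J
    have hwJ : contractLast z a J = z J.castSucc := by
      simp only [contractLast, a, sub_sub_cancel, min_self]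
    refine ⟨Fin.snoc y a, snoc_mem_genPerm hy huniv, ?_⟩
    rcases hJ with rfl | rfl
    · rw [sum_snoc_castSucc, hyJ, hwJ]
    · rw [sum_snoc_insert_last_castSucc, hyJ, hwJ]
      ring

lemma exists_mem_sum_eq_of_convexHull_eq_genPerm {n : ℕ} {z : Finset (Fin n) → ℝ}
    (hz : Submodular z) {S : Finset (Fin n → ℝ)} (hS : convexHull ℝ ↑S = GenPerm z)
    (I : Finset (Fin n)) : ∃ x ∈ S, ∑ i ∈ I, x i = z I := by
  obtain ⟨t, ht, htI⟩ := exists_mem_genPerm_sum_eq hz I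
  have hne : S.Nonempty := by
    rw [← hS] at ht
    exact coe_nonempty.mp (convexHull_nonempty_iff.mp ⟨t, ht⟩)
  obtain ⟨x, hx, hmax⟩ := S.exists_max_image (fun x => ∑ i ∈ I, x i) hne
  have hhull : convexHull ℝ ↑S ⊆ {y : Fin n → ℝ | ∑ i ∈ I, y i ≤ ∑ i ∈ I, x i} :=
    convexHull_min hmax (convex_halfSpace_le ⟨fun _ _ => sum_add_distrib, fun _ _ => by
      simp [mul_sum]⟩ _)
  have hxz : ∑ i ∈ I, x i ≤ z I :=
    sum_le_of_mem_genPerm (hS ▸ subset_convexHull ℝ (S : Set (Fin n → ℝ)) hx) I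
  exact ⟨x, hx, hxz.antisymm (htI ▸ hhull (hS ▸ ht))⟩

/-- The largest value `t₁ (Fin.last n)` can take in a decomposition `t = t₁ + t₂` with
`t₁ ∈ GenPerm z₁` and `t₂ ∈ GenPerm z₂`. -/
def splitLast {n : ℕ} (z₁ z₂ : Finset (Fin (n + 1)) → ℝ) (t : Fin (n + 1) → ℝ) : ℝ :=
  univ.inf' univ_nonempty fun J : Finset (Fin n) =>
    z₁ (insert (Fin.last n) J.castSucc) + z₂ J.castSucc - ∑ i ∈ J.castSucc, t i

lemma splitLast_le {n : ℕ} (z₁ z₂ : Finset (Fin (n + 1)) → ℝ) (t : Fin (n + 1) → ℝ)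
    (J : Finset (Fin n)) :
    splitLast z₁ z₂ t
      ≤ z₁ (insert (Fin.last n) J.castSucc) + z₂ J.castSucc - ∑ i ∈ J.castSucc, t i :=
  inf'_le _ (mem_univ J)

section splitLast

variable {n : ℕ} {z₁ z₂ : Finset (Fin (n + 1)) → ℝ} {t : Fin (n + 1) → ℝ}

lemma le_splitLast (hz₁ : Submodular z₁) (hz₂ : Submodular z₂) (ht : t ∈ GenPerm (z₁ + z₂))
    (I : Finset (Fin n)) :
    ∑ i ∈ insert (Fin.last n) I.castSucc, t i - z₁ I.castSucc
        - z₂ (insert (Fin.last n) I.castSucc) ≤ splitLast z₁ z₂ t := by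
  refine le_inf' _ _ fun J _ => ?_
  have ht_union := sum_le_of_mem_genPerm ht (insert (Fin.last n) (I ∪ J).castSucc)
  have ht_inter := sum_le_of_mem_genPerm ht (I ∩ J).castSucc
  have h₁ := hz₁.2 I.castSucc (insert (Fin.last n) J.castSucc)
  have h₂ := hz₂.2 (insert (Fin.last n) I.castSucc) J.castSucc
  have hsum := sum_union_inter (s₁ := insert (Fin.last n) I.castSucc) (s₂ := J.castSucc) (f := t)
  rw [union_insert, inter_insert_of_notMem (last_notMem_castSucc I), ← castSucc_union,
    ← castSucc_inter] at h₁
  rw [insert_union, insert_inter_of_notMem (last_notMem_castSucc J), ← castSucc_union,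
    ← castSucc_inter] at h₂ hsum
  simp only [Pi.add_apply] at ht_union ht_inter
  linarith

lemma splitLast_mem {R : AddSubgroup ℝ} (hR₁ : ∀ I, z₁ I ∈ R) (hR₂ : ∀ I, z₂ I ∈ R)
    (htR : ∀ i, t i ∈ R) : splitLast z₁ z₂ t ∈ R := by
  obtain ⟨J, -, hJ⟩ := exists_mem_eq_inf' (univ_nonempty (α := Finset (Fin n))) fun J =>
    z₁ (insert (Fin.last n) J.castSucc) + z₂ J.castSucc - ∑ i ∈ J.castSucc, t i
  rw [splitLast, hJ]
  exact R.sub_mem (R.add_mem (hR₁ _) (hR₂ _)) (R.sum_mem fun i _ => htR i)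

lemma sum_castSucc_univ_of_mem_genPerm_add (ht : t ∈ GenPerm (z₁ + z₂)) :
    ∑ i ∈ (univ : Finset (Fin n)).castSucc, t i = z₁ univ + z₂ univ - t (Fin.last n) := by
  have := ht.2
  rw [← insert_last_castSucc_univ, sum_insert (last_notMem_castSucc _)] at this
  simp only [Pi.add_apply, insert_last_castSucc_univ] at this
  linarith

lemma contractLast_splitLast_univ (hz₁ : Submodular z₁) (hz₂ : Submodular z₂)
    (ht : t ∈ GenPerm (z₁ + z₂)) :
    contractLast z₁ (splitLast z₁ z₂ t) univ = z₁ univ - splitLast z₁ z₂ t ∧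
      contractLast z₂ (t (Fin.last n) - splitLast z₁ z₂ t) univ
        = z₂ univ - (t (Fin.last n) - splitLast z₁ z₂ t) := by
  have hsum := sum_castSucc_univ_of_mem_genPerm_add ht
  have hle := le_splitLast hz₁ hz₂ ht univ
  rw [insert_last_castSucc_univ, ht.2] at hle
  simp only [Pi.add_apply] at hle
  have hge := splitLast_le z₁ z₂ t univ
  rw [insert_last_castSucc_univ] at hge
  exact ⟨contractLast_univ (by linarith), contractLast_univ (by linarith)⟩

lemma castSucc_mem_genPerm_contractLast_splitLast (hz₁ : Submodular z₁) (hz₂ : Submodular z₂)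
    (ht : t ∈ GenPerm (z₁ + z₂)) :
    (fun j : Fin n => t j.castSucc) ∈ GenPerm (contractLast z₁ (splitLast z₁ z₂ t)
      + contractLast z₂ (t (Fin.last n) - splitLast z₁ z₂ t)) := by
  obtain ⟨hu₁, hu₂⟩ := contractLast_splitLast_univ hz₁ hz₂ ht
  refine ⟨fun J _ => ?_, ?_⟩
  · have h_lo := sum_le_of_mem_genPerm ht J.castSucc
    have h_hi := sum_le_of_mem_genPerm ht (insert (Fin.last n) J.castSucc)
    have h_le := splitLast_le z₁ z₂ t J
    have le_h := le_splitLast hz₁ hz₂ ht J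
    rw [sum_insert (last_notMem_castSucc J)] at h_hi le_h
    simp only [Pi.add_apply] at h_lo h_hi ⊢
    rw [← sum_castSucc, contractLast, contractLast, ← min_add_add_right, ← min_add_add_left,
      ← min_add_add_left]
    exact le_min (le_min (by linarith) (by linarith)) (le_min (by linarith) (by linarith))
  · simp only [Pi.add_apply, hu₁, hu₂]
    linarith [sum_castSucc_univ_of_mem_genPerm_add ht, sum_castSucc univ t]

end splitLast

theorem exists_add_eq_of_mem_genPerm_add (R : AddSubgroup ℝ) {n : ℕ}
    {z₁ z₂ : Finset (Fin n) → ℝ} (hz₁ : Submodular z₁) (hz₂ : Submodular z₂)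
    (hR₁ : ∀ I, z₁ I ∈ R) (hR₂ : ∀ I, z₂ I ∈ R) {t : Fin n → ℝ} (ht : t ∈ GenPerm (z₁ + z₂))
    (htR : ∀ i, t i ∈ R) :
    ∃ t₁ ∈ GenPerm z₁, ∃ t₂ ∈ GenPerm z₂, t₁ + t₂ = t ∧ (∀ i, t₁ i ∈ R) ∧ ∀ i, t₂ i ∈ R := by
  induction n with
  | zero =>
    exact ⟨t, mem_genPerm_fin_zero hz₁ t, 0, mem_genPerm_fin_zero hz₂ 0, add_zero t, htR,
      fun i => i.elim0⟩
  | succ n ih =>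
    set a := splitLast z₁ z₂ t
    set b := t (Fin.last n) - a
    have ha : a ≤ z₁ {Fin.last n} := by
      simpa [hz₂.1] using splitLast_le z₁ z₂ t ∅
    have hb : b ≤ z₂ {Fin.last n} := by
      have := le_splitLast hz₁ hz₂ ht ∅
      simp only [castSucc_empty, insert_empty, sum_singleton, hz₁.1] at this
      linarith
    have haR : a ∈ R := splitLast_mem hR₁ hR₂ htR
    have hbR : b ∈ R := R.sub_mem (htR _) haR
    obtain ⟨hu₁, hu₂⟩ := contractLast_splitLast_univ hz₁ hz₂ ht
    obtain ⟨y₁, hy₁, y₂, hy₂, hy, hy₁R, hy₂R⟩ := ih (hz₁.contractLast ha) (hz₂.contractLast hb)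
      (contractLast_mem hR₁ haR) (contractLast_mem hR₂ hbR)
      (castSucc_mem_genPerm_contractLast_splitLast hz₁ hz₂ ht) fun j => htR _
    refine ⟨Fin.snoc y₁ a, snoc_mem_genPerm hy₁ hu₁, Fin.snoc y₂ b, snoc_mem_genPerm hy₂ hu₂,
      ?_, fun i => ?_, fun i => ?_⟩
    · ext i
      cases i using Fin.lastCases
      · simp [b]
      · simpa using congrFun hy _
    all_goals cases i using Fin.lastCases <;> simp [haR, hbR, hy₁R, hy₂R]

theorem genPerm_add {n : ℕ} {z₁ z₂ : Finset (Fin n) → ℝ} (hz₁ : Submodular z₁)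
    (hz₂ : Submodular z₂) : GenPerm z₁ + GenPerm z₂ = GenPerm (z₁ + z₂) := by
  refine (genPerm_add_subset z₁ z₂).antisymm fun t ht => ?_
  obtain ⟨t₁, ht₁, t₂, ht₂, rfl, -⟩ := exists_add_eq_of_mem_genPerm_add ⊤ hz₁ hz₂
    (fun _ => AddSubgroup.mem_top _) (fun _ => AddSubgroup.mem_top _) ht
    (fun _ => AddSubgroup.mem_top _)
  exact Set.add_mem_add ht₁ ht₂

theorem exists_int_add_eq_of_mem_genPerm_add {n : ℕ} {z₁ z₂ : Finset (Fin n) → ℝ}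
    (hz₁ : Submodular z₁) (hz₂ : Submodular z₂) (hZ₁ : ∀ I, ∃ m : ℤ, (m : ℝ) = z₁ I)
    (hZ₂ : ∀ I, ∃ m : ℤ, (m : ℝ) = z₂ I) (α : Fin n → ℤ)
    (hα : (fun i => (α i : ℝ)) ∈ GenPerm (z₁ + z₂)) :
    ∃ β γ : Fin n → ℤ, (fun i => (β i : ℝ)) ∈ GenPerm z₁ ∧ (fun i => (γ i : ℝ)) ∈ GenPerm z₂ ∧
      β + γ = α := by
  obtain ⟨t₁, ht₁, t₂, ht₂, ht, hZt₁, hZt₂⟩ := exists_add_eq_of_mem_genPerm_add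
    (Int.castAddHom ℝ).range hz₁ hz₂ hZ₁ hZ₂ hα fun i => ⟨α i, rfl⟩
  choose β hβ using hZt₁
  choose γ hγ using hZt₂
  have hβt : (fun i => (β i : ℝ)) = t₁ := funext hβ
  have hγt : (fun i => (γ i : ℝ)) = t₂ := funext hγ
  refine ⟨β, γ, hβt ▸ ht₁, hγt ▸ ht₂, funext fun i => ?_⟩
  have := congrFun ht i
  simp only [Pi.add_apply, ← hβ, ← hγ, Int.coe_castAddHom] at this
  exact_mod_cast this

section Polynomial

variable {σ R : Type*} [CommSemiring R] [PartialOrder R] [IsStrictOrderedRing R]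

lemma MvPolynomial.support_mul_of_nonneg [DecidableEq σ] {f g : MvPolynomial σ R}
    (hf : ∀ d, 0 ≤ f.coeff d) (hg : ∀ d, 0 ≤ g.coeff d) :
    (f * g).support = f.support + g.support := by
  refine (support_mul f g).antisymm fun d hd => ?_
  obtain ⟨a, ha, b, hb, rfl⟩ := mem_add.mp hd
  rw [mem_support_iff] at ha hb ⊢
  have hmem : (a, b) ∈ antidiagonal (a + b) := mem_antidiagonal.mpr rfl
  have hle : f.coeff a * g.coeff b
      ≤ ∑ p ∈ antidiagonal (a + b), f.coeff p.1 * g.coeff p.2 :=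
    single_le_sum (f := fun p : (σ →₀ ℕ) × (σ →₀ ℕ) => f.coeff p.1 * g.coeff p.2)
      (fun p _ => mul_nonneg (hf p.1) (hg p.2)) hmem
  rw [coeff_mul]
  exact ((mul_pos ((hf a).lt_of_ne' ha) ((hg b).lt_of_ne' hb)).trans_le hle).ne'

end Polynomial

section Newton

variable {n : ℕ} {f g : MvPolynomial (Fin n) ℝ}

lemma supportPts_mul (hf0 : ∀ d, 0 ≤ f.coeff d) (hg0 : ∀ d, 0 ≤ g.coeff d) :
    supportPts (f * g) = supportPts f + supportPts g := by
  classical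
  rw [supportPts, support_mul_of_nonneg hf0 hg0, Finset.coe_add]
  ext x
  simp only [Set.mem_image, Set.mem_add, supportPts, mem_coe]
  constructor
  · rintro ⟨_, ⟨a, ha, b, hb, rfl⟩, rfl⟩
    exact ⟨_, ⟨a, ha, rfl⟩, _, ⟨b, hb, rfl⟩, by ext; simp⟩
  · rintro ⟨_, ⟨a, ha, rfl⟩, _, ⟨b, hb, rfl⟩, rfl⟩
    exact ⟨a + b, ⟨a, ha, b, hb, rfl⟩, by ext; simp⟩

lemma newton_mul (hf0 : ∀ d, 0 ≤ f.coeff d) (hg0 : ∀ d, 0 ≤ g.coeff d) :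
    newton (f * g) = newton f + newton g := by
  rw [newton, supportPts_mul hf0 hg0, convexHull_add]
  rfl

lemma exists_int_eq_of_newton_eq_genPerm {z : Finset (Fin n) → ℝ} (hz : Submodular z)
    (hfz : newton f = GenPerm z) (I : Finset (Fin n)) : ∃ m : ℤ, (m : ℝ) = z I := by
  rw [newton, supportPts, ← coe_image] at hfz
  obtain ⟨_, hx, hxI⟩ := exists_mem_sum_eq_of_convexHull_eq_genPerm hz hfz I
  obtain ⟨d, -, rfl⟩ := mem_image.mp hx
  exact ⟨∑ i ∈ I, (d i : ℤ), by rw [← hxI]; push_cast; rfl⟩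

lemma SNP.mul (hf : SNP f) (hg : SNP g) (hf0 : ∀ d, 0 ≤ f.coeff d)
    (hg0 : ∀ d, 0 ≤ g.coeff d)
    (hdecomp : ∀ α : Fin n → ℤ, (fun i => (α i : ℝ)) ∈ newton f + newton g →
      ∃ β γ : Fin n → ℤ, (fun i => (β i : ℝ)) ∈ newton f ∧ (fun i => (γ i : ℝ)) ∈ newton g ∧
        β + γ = α) :
    SNP (f * g) := by
  classical
  intro α hα
  rw [newton_mul hf0 hg0] at hα
  obtain ⟨β, γ, hβ, hγ, rfl⟩ := hdecomp α hα
  obtain ⟨d₁, hd₁, h₁⟩ := hf β hβ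
  obtain ⟨d₂, hd₂, h₂⟩ := hg γ hγ
  refine ⟨d₁ + d₂, support_mul_of_nonneg hf0 hg0 ▸ add_mem_add hd₁ hd₂, fun i => ?_⟩
  simp [h₁, h₂]

end Newton

theorem stmt4 {n : ℕ} (f g : MvPolynomial (Fin n) ℝ)
    (hf0 : ∀ d, 0 ≤ f.coeff d) (hg0 : ∀ d, 0 ≤ g.coeff d)
    (hf : SNP f) (hg : SNP g)
    (hfN : IsGenPerm (newton f)) (hgN : IsGenPerm (newton g)) :
    newton (f * g) = newton f + newton g ∧ IsGenPerm (newton (f * g)) ∧ SNP (f * g) := by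
  obtain ⟨z₁, hz₁, hfz⟩ := hfN
  obtain ⟨z₂, hz₂, hgz⟩ := hgN
  have hnewton := newton_mul hf0 hg0
  have hsum : newton f + newton g = GenPerm (z₁ + z₂) := by rw [hfz, hgz, genPerm_add hz₁ hz₂]
  refine ⟨hnewton, ⟨z₁ + z₂, hz₁.add hz₂, hnewton.trans hsum⟩,
    hf.mul hg hf0 hg0 fun α hα => ?_⟩
  rw [hfz, hgz]
  exact exists_int_add_eq_of_mem_genPerm_add hz₁ hz₂ (exists_int_eq_of_newton_eq_genPerm hz₁ hfz)
    (exists_int_eq_of_newton_eq_genPerm hz₂ hgz) α (hsum ▸ hα)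
end

section
/- Let λ, μ, ν be partitions with at most k parts and |ν| = |λ| + |μ|. The monomial x^ν appears with nonzero coefficient in the product of Schur polynomials s_λ(x_1,...,x_k)·s_μ(x_1,...,x_k) if and only if ν lies in the permutahedron of λ+μ, i.e., ν is dominated by λ+μ: ∑_{i=1}^t ν_i ≤ ∑_{i=1}^t (λ_i+μ_i) for all t. -/
/-! Column strictness forces the entries of row `i` of a semistandard tableau to be at least `i`,
so the content of a tableau of shape `λ` is dominated by `λ`, and every monomial `x^ν` of
`s_λ s_μ` has `ν ≤ λ + μ`. Conversely, start from the tableaux whose row `i` is filled with `i`,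
of contents `c = λ` and `d = μ`. While `c + d ≠ ν`, at the rightmost maximum `B = A + 1` of the
slack `t ↦ Σ_{i<t} (c + d - ν)_i` the composition `c + d` has a descent, so one of the two
tableaux has fewer letters `B` than `A`. Turning the `A` of the rightmost column containing `A`
but not `B` into a `B` keeps that tableau semistandard and keeps `c + d` dominating `ν`, while
`Σ_t Σ_{i<t} (c + d)_i` drops by one. -/

open Finset MvPolynomial
open scoped Classical

noncomputable section

/-- `T` is a semistandard Young tableau of shape `f` (a partition with at most
`k` parts, 0-indexed) with entries in `{1,…,k}` (encoded 0-indexed as `Fin k`):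
the box `(i,j)` is filled iff `j < f i`, rows weakly increase, and columns
strictly increase. -/
def IsSSYT {k : ℕ} (f : Fin k → ℕ) (T : Fin k × ℕ → Option (Fin k)) : Prop :=
  (∀ (i : Fin k) (j : ℕ), (T (i, j)).isSome ↔ j < f i) ∧
  (∀ (i : Fin k) (j j' : ℕ) (a b : Fin k),
      j ≤ j' → T (i, j) = some a → T (i, j') = some b → a ≤ b) ∧
  (∀ (i i' : Fin k) (j : ℕ) (a b : Fin k),
      i < i' → T (i, j) = some a → T (i', j) = some b → a < b)

def content {k : ℕ} (f : Fin k → ℕ) (T : Fin k × ℕ → Option (Fin k)) (l : Fin k) : ℕ :=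
  ((univ ×ˢ range (univ.sup f)).filter fun c => T c = some l).card

def schurPoly {k : ℕ} (f : Fin k → ℕ) : MvPolynomial (Fin k) ℝ :=
  ∑ᶠ T : Fin k × ℕ → Option (Fin k),
    if IsSSYT f T then ∏ l : Fin k, X l ^ content f T l else 0

section

variable {k : ℕ}

def partialSum (c : Fin k → ℕ) (t : ℕ) : ℕ :=
  ∑ i ∈ univ.filter (fun i : Fin k => (i : ℕ) < t), c i

@[simp]
lemma partialSum_zero (c : Fin k → ℕ) : partialSum c 0 = 0 := by
  simp [partialSum]

lemma partialSum_add (c d : Fin k → ℕ) (t : ℕ) :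
    partialSum (c + d) t = partialSum c t + partialSum d t :=
  sum_add_distrib

lemma partialSum_single (A : Fin k) (t : ℕ) :
    partialSum (Pi.single A 1) t = if (A : ℕ) < t then 1 else 0 := by
  simp [partialSum, Pi.single_apply]

lemma partialSum_succ (c : Fin k → ℕ) (i : Fin k) :
    partialSum c (i + 1) = partialSum c i + c i := by
  have : univ.filter (fun j : Fin k => (j : ℕ) < i + 1)
      = insert i (univ.filter (fun j : Fin k => (j : ℕ) < i)) := by
    ext j
    simp only [mem_filter, mem_univ, true_and, mem_insert, Fin.ext_iff]
    omega
  rw [partialSum, this, sum_insert (by simp), add_comm]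
  rfl

lemma partialSum_of_le (c : Fin k → ℕ) {t : ℕ} (ht : k ≤ t) : partialSum c t = ∑ i, c i := by
  rw [partialSum, filter_true_of_mem fun i _ => i.isLt.trans_le ht]

lemma partialSum_eq_of_add_single_eq {c c' : Fin k → ℕ} {A B : Fin k}
    (hAB : (A : ℕ) + 1 = B) (h : c' + Pi.single A 1 = c + Pi.single B 1) (t : ℕ) :
    partialSum c' t + (if t = B then 1 else 0) = partialSum c t := by
  have := congrArg (partialSum · t) h
  simp only [partialSum_add, partialSum_single] at this
  split_ifs at this ⊢ <;> omega

lemma eq_of_partialSum_eq {c d : Fin k → ℕ} (h : ∀ t ≤ k, partialSum c t = partialSum d t) :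
    c = d := by
  funext i
  have h₁ := h (i + 1) i.isLt
  rw [partialSum_succ, partialSum_succ, h i i.isLt.le] at h₁
  omega

lemma exists_descent_of_dominates {e nu : Fin k → ℕ} (hnu : Antitone nu)
    (hdom : ∀ t, partialSum nu t ≤ partialSum e t) (htot : ∑ i, e i = ∑ i, nu i)
    (hne : e ≠ nu) :
    ∃ A B : Fin k, (A : ℕ) + 1 = B ∧ partialSum nu B < partialSum e B ∧ e B < e A := by
  obtain ⟨t₀, ht₀k, ht₀⟩ : ∃ t ≤ k, partialSum nu t < partialSum e t := by
    by_contra! h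
    exact hne (eq_of_partialSum_eq fun t ht => le_antisymm (h t ht) (hdom t))
  -- the rightmost maximiser `a` of the slack: maximise `(slack t, t)` lexicographically
  obtain ⟨a, ha, hmax⟩ := exists_max_image (range (k + 1))
    (fun t => toLex (partialSum e t - partialSum nu t, t)) ⟨0, by simp⟩
  have hmax' : ∀ t ≤ k, partialSum e t - partialSum nu t < partialSum e a - partialSum nu a ∨
      partialSum e t - partialSum nu t = partialSum e a - partialSum nu a ∧ t ≤ a :=
    fun t ht => Prod.Lex.toLex_le_toLex.mp (hmax t (by simp; omega))
  rw [mem_range] at ha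
  have hpos : partialSum nu a < partialSum e a := by have := hmax' t₀ ht₀k; omega
  have ha0 : a ≠ 0 := by rintro rfl; simp at hpos
  have hak : a ≠ k := by
    rintro rfl
    simp [partialSum_of_le _ le_rfl, htot] at hpos
  have hA_le := hmax' (a - 1) (by omega)
  have hB_lt := hmax' (a + 1) (by omega)
  have hdA := hdom (a - 1)
  have hdB := hdom (a + 1)
  obtain ⟨A, hAv⟩ : ∃ A : Fin k, (A : ℕ) = a - 1 := ⟨⟨a - 1, by omega⟩, rfl⟩
  obtain ⟨B, hBv⟩ : ∃ B : Fin k, (B : ℕ) = a := ⟨⟨a, by omega⟩, rfl⟩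
  have hA := partialSum_succ e A
  have hA' := partialSum_succ nu A
  have hB := partialSum_succ e B
  have hB' := partialSum_succ nu B
  have hnuBA : nu B ≤ nu A := hnu (Fin.le_def.mpr (by omega))
  rw [hAv, show a - 1 + 1 = a by omega] at hA hA'
  rw [hBv] at hB hB'
  exact ⟨A, B, by omega, hBv ▸ hpos, by omega⟩

namespace IsSSYT

variable {f : Fin k → ℕ} {T : Fin k × ℕ → Option (Fin k)}

lemma lt_of_eq_some (hT : IsSSYT f T) {i : Fin k} {j : ℕ} {l : Fin k}
    (h : T (i, j) = some l) : j < f i :=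
  (hT.1 i j).mp (by simp [h])

lemma exists_eq_some (hT : IsSSYT f T) {i : Fin k} {j : ℕ} (h : j < f i) :
    ∃ l, T (i, j) = some l :=
  Option.isSome_iff_exists.mp ((hT.1 i j).mpr h)

lemma eq_of_eq_some_of_eq_some (hT : IsSSYT f T) {i₁ i₂ : Fin k} {j : ℕ} {l : Fin k}
    (h₁ : T (i₁, j) = some l) (h₂ : T (i₂, j) = some l) : i₁ = i₂ := by
  by_contra hne
  rcases lt_or_gt_of_ne hne with h | h
  · exact lt_irrefl l (hT.2.2 _ _ j l l h h₁ h₂)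
  · exact lt_irrefl l (hT.2.2 _ _ j l l h h₂ h₁)

lemma row_le_of_eq_some (hf : Antitone f) (hT : IsSSYT f T) {i : Fin k} {j : ℕ} {l : Fin k}
    (h : T (i, j) = some l) : (i : ℕ) ≤ l := by
  obtain ⟨n, hn⟩ : ∃ n, (i : ℕ) = n := ⟨_, rfl⟩
  induction n generalizing i l with
  | zero => omega
  | succ n ih =>
    obtain ⟨i', hi'v⟩ : ∃ i' : Fin k, (i' : ℕ) = n := ⟨⟨n, by omega⟩, rfl⟩
    have hi' : i' < i := Fin.lt_def.mpr (by omega)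
    obtain ⟨l', hl'⟩ := hT.exists_eq_some ((hT.lt_of_eq_some h).trans_le (hf hi'.le))
    have := ih hl' hi'v
    have := Fin.lt_def.mp (hT.2.2 i' i j l' l hi' hl' h)
    omega

end IsSSYT

lemma finite_setOf_isSSYT (f : Fin k → ℕ) :
    {T : Fin k × ℕ → Option (Fin k) | IsSSYT f T}.Finite := by
  refine Set.Finite.of_finite_image (f := fun T (p : Fin k × Fin (univ.sup f)) => T (p.1, p.2))
    (Set.toFinite _) fun T hT T' hT' hEq => funext fun ⟨i, j⟩ => ?_
  by_cases hj : j < univ.sup f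
  · exact congrFun hEq (i, ⟨j, hj⟩)
  · have hfi : f i ≤ univ.sup f := le_sup (mem_univ i)
    have h₁ := (hT.1 i j).not
    have h₂ := (hT'.1 i j).not
    simp only [Option.not_isSome_iff_eq_none] at h₁ h₂
    rw [h₁.mpr (by omega), h₂.mpr (by omega)]

def IsSSYTContent (f c : Fin k → ℕ) : Prop :=
  ∃ T, IsSSYT f T ∧ content f T = c

lemma schurPoly_eq_sum (f : Fin k → ℕ) :
    schurPoly f = ∑ T ∈ (finite_setOf_isSSYT f).toFinset,
      monomial (Finsupp.equivFunOnFinite.symm (content f T)) (1 : ℝ) := by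
  rw [schurPoly, finsum_eq_sum_of_support_subset _ fun T hT => ?_]
  · refine sum_congr rfl fun T hT => ?_
    rw [if_pos (Set.mem_ofPred.mp ((finite_setOf_isSSYT f).mem_toFinset.mp hT)), monomial_eq, C_1, one_mul,
      Finsupp.prod_fintype _ _ fun _ => pow_zero _]
    rfl
  · by_contra h
    exact hT (if_neg (by simpa using h))

lemma coeff_schurPoly_mul_ne_zero_iff (f g nu : Fin k → ℕ) :
    coeff (Finsupp.equivFunOnFinite.symm nu) (schurPoly f * schurPoly g) ≠ 0 ↔
      ∃ c d, IsSSYTContent f c ∧ IsSSYTContent g d ∧ c + d = nu := by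
  rw [schurPoly_eq_sum, schurPoly_eq_sum, sum_mul_sum, ← sum_product', coeff_sum]
  simp only [monomial_mul, coeff_monomial, one_mul]
  rw [sum_boole, Nat.cast_ne_zero, card_ne_zero, filter_nonempty_iff]
  simp only [mem_product, Set.Finite.mem_toFinset, Set.mem_ofPred_eq, Finsupp.ext_iff,
    Finsupp.coe_add, Pi.add_apply, Finsupp.coe_equivFunOnFinite_symm, Prod.exists]
  constructor
  · rintro ⟨T, T', ⟨hT, hT'⟩, h⟩
    exact ⟨_, _, ⟨T, hT, rfl⟩, ⟨T', hT', rfl⟩, funext h⟩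
  · rintro ⟨_, _, ⟨T, hT, rfl⟩, ⟨T', hT', rfl⟩, rfl⟩
    exact ⟨T, T', ⟨hT, hT'⟩, fun _ => rfl⟩

lemma IsSSYT.partialSum_content_le {f : Fin k → ℕ} {T : Fin k × ℕ → Option (Fin k)}
    (hf : Antitone f) (hT : IsSSYT f T) (t : ℕ) :
    partialSum (content f T) t ≤ partialSum f t := by
  set L := univ.filter fun i : Fin k => (i : ℕ) < t
  have hcontent : partialSum (content f T) t
      = #(L.biUnion fun l => (univ ×ˢ range (univ.sup f)).filter (T · = some l)) := by
    refine (card_biUnion fun l _ l' _ hll' => disjoint_filter.mpr fun c _ h h' => ?_).symm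
    exact hll' (Option.some_injective _ (h.symm.trans h'))
  have hshape : partialSum f t = #(L.biUnion fun i => {i} ×ˢ range (f i)) := by
    rw [card_biUnion fun i _ i' _ hii' => disjoint_left.mpr fun c h h' => ?_]
    · simp [partialSum, L]
    · exact hii' ((mem_singleton.mp (mem_product.mp h).1).symm.trans
        (mem_singleton.mp (mem_product.mp h').1))
  rw [hcontent, hshape]
  refine card_le_card fun ⟨i, j⟩ hc => ?_
  simp only [mem_biUnion, mem_filter, L, mem_univ, true_and] at hc
  obtain ⟨l, hlt, -, hl⟩ := hc
  have := hT.row_le_of_eq_some hf hl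
  simp only [mem_biUnion, mem_filter, L, mem_univ, true_and, mem_product, mem_singleton,
    mem_range]
  exact ⟨i, by omega, rfl, hT.lt_of_eq_some hl⟩

lemma IsSSYTContent.partialSum_le {f c : Fin k → ℕ} (hf : Antitone f) (hc : IsSSYTContent f c)
    (t : ℕ) : partialSum c t ≤ partialSum f t := by
  obtain ⟨T, hT, rfl⟩ := hc
  exact hT.partialSum_content_le hf t

lemma isSSYTContent_self (f : Fin k → ℕ) : IsSSYTContent f f := by
  refine ⟨fun c => if c.2 < f c.1 then some c.1 else none, ⟨fun i j => ?_, ?_, ?_⟩, ?_⟩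
  · by_cases h : j < f i <;> simp [h]
  · intro i j j' a b _ ha hb
    simp only [Option.ite_none_right_eq_some, Option.some.injEq] at ha hb
    rw [← ha.2, ← hb.2]
  · intro i i' j a b hii' ha hb
    simp only [Option.ite_none_right_eq_some, Option.some.injEq] at ha hb
    rwa [← ha.2, ← hb.2]
  · funext l
    suffices (univ ×ˢ range (univ.sup f)).filter
        (fun c : Fin k × ℕ => (if c.2 < f c.1 then some c.1 else none) = some l)
        = {l} ×ˢ range (f l) by
      rw [content, this, card_product, card_singleton, card_range, one_mul]
    ext ⟨i, j⟩
    simp only [Option.ite_none_right_eq_some, Option.some.injEq, mem_filter, mem_product,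
      mem_univ, mem_range, true_and, mem_singleton]
    constructor
    · rintro ⟨-, hj, rfl⟩
      exact ⟨rfl, hj⟩
    · rintro ⟨rfl, hj⟩
      exact ⟨hj.trans_le (le_sup (mem_univ i)), hj, rfl⟩

namespace IsSSYT

variable {f : Fin k → ℕ} {T : Fin k × ℕ → Option (Fin k)}

lemma update (hT : IsSSYT f T) {p : Fin k × ℕ} {a b : Fin k} (hp : T p = some a)
    (hleft : ∀ j < p.2, ∀ x, T (p.1, j) = some x → x ≤ b)
    (hright : ∀ j > p.2, ∀ x, T (p.1, j) = some x → b ≤ x)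
    (habove : ∀ i < p.1, ∀ x, T (i, p.2) = some x → x < b)
    (hbelow : ∀ i > p.1, ∀ x, T (i, p.2) = some x → b < x) :
    IsSSYT f (Function.update T p (some b)) := by
  obtain ⟨i₀, j₀⟩ := p
  refine ⟨fun i j => ?_, fun i j j' x y hjj' hx hy => ?_, fun i i' j x y hii' hx hy => ?_⟩
  · by_cases h : (i, j) = (i₀, j₀)
    · obtain ⟨rfl, rfl⟩ := Prod.mk.inj h
      rw [Function.update_self, ← hT.1, hp]
      rfl
    · rw [Function.update_of_ne h, hT.1]
  · simp only [Function.update_apply, Prod.mk.injEq] at hx hy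
    split_ifs at hx hy with h₁ h₂ h₂
    · exact (Option.some_injective _ (hx.symm.trans hy)).le
    · obtain ⟨rfl, rfl⟩ := h₁
      exact (Option.some_injective _ hx) ▸ hright j' (by omega) y hy
    · obtain ⟨rfl, rfl⟩ := h₂
      exact (Option.some_injective _ hy) ▸ hleft j (by omega) x hx
    · exact hT.2.1 i j j' x y hjj' hx hy
  · simp only [Function.update_apply, Prod.mk.injEq] at hx hy
    split_ifs at hx hy with h₁ h₂ h₂
    · exact absurd (h₁.1.trans h₂.1.symm) hii'.ne
    · obtain ⟨rfl, rfl⟩ := h₁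
      exact (Option.some_injective _ hx) ▸ hbelow i' hii' y hy
    · obtain ⟨rfl, rfl⟩ := h₂
      exact (Option.some_injective _ hy) ▸ habove i hii' x hx
    · exact hT.2.2 i i' j x y hii' hx hy

/-- By column strictness each letter occurs at most once per column. -/
lemma content_eq_card_columns (hT : IsSSYT f T) (l : Fin k) :
    content f T l = #((range (univ.sup f)).filter fun j => ∃ i, T (i, j) = some l) := by
  rw [content, ← card_image_of_injOn (f := Prod.snd) fun c hc c' hc' hcc' => ?_]
  · congr 1
    ext j
    simp
  · simp only [coe_filter, Set.mem_ofPred_eq] at hc hc'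
    exact Prod.ext (hT.eq_of_eq_some_of_eq_some hc.2 (hcc' ▸ hc'.2)) hcc'

lemma exists_movable_cell (hT : IsSSYT f T) {A B : Fin k} (hAB : (A : ℕ) + 1 = B)
    (h : content f T B < content f T A) :
    ∃ i j, T (i, j) = some A ∧ (∀ i', T (i', j) ≠ some B) ∧ ∀ j' > j, T (i, j') ≠ some A := by
  set cols : Fin k → Finset ℕ := fun l =>
    (range (univ.sup f)).filter fun j => ∃ i, T (i, j) = some l
  have hne : (cols A \ cols B).Nonempty := by
    rw [sdiff_nonempty]
    intro hsub
    have := card_le_card hsub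
    rw [← hT.content_eq_card_columns, ← hT.content_eq_card_columns] at this
    omega
  obtain ⟨hjA, hjB⟩ := mem_sdiff.mp ((cols A \ cols B).max'_mem hne)
  set j := (cols A \ cols B).max' hne
  obtain ⟨hjN, i, hi⟩ := mem_filter.mp hjA
  have hnoB : ∀ i', T (i', j) ≠ some B := fun i' hi' => hjB (mem_filter.mpr ⟨hjN, i', hi'⟩)
  refine ⟨i, j, hi, hnoB, fun j' hj' hi' => ?_⟩
  have hj'A : j' ∈ cols A := mem_filter.mpr
    ⟨mem_range.mpr ((hT.lt_of_eq_some hi').trans_le (le_sup (mem_univ i))), i, hi'⟩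
  have hj'B : j' ∈ cols B := by
    by_contra hj'B
    have := (cols A \ cols B).le_max' j' (mem_sdiff.mpr ⟨hj'A, hj'B⟩)
    omega
  obtain ⟨-, i₂, hi₂⟩ := mem_filter.mp hj'B
  have hii₂ : i < i₂ := by
    rcases lt_trichotomy i i₂ with hlt | rfl | hgt
    · exact hlt
    · have := Option.some_injective _ (hi'.symm.trans hi₂)
      omega
    · have := Fin.lt_def.mp (hT.2.2 _ _ _ _ _ hgt hi₂ hi')
      omega
  obtain ⟨y, hy⟩ := hT.exists_eq_some (hj'.trans (hT.lt_of_eq_some hi₂))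
  have hAy := Fin.lt_def.mp (hT.2.2 _ _ _ _ _ hii₂ hi hy)
  have hyB := Fin.le_def.mp (hT.2.1 _ _ _ _ _ hj'.le hy hi₂)
  exact hnoB i₂ (by rwa [Fin.ext (show (y : ℕ) = B by omega)] at hy)

end IsSSYT

lemma content_update_add_single {f : Fin k → ℕ} {T : Fin k × ℕ → Option (Fin k)}
    {p : Fin k × ℕ} {a : Fin k} (hp : T p = some a) (hpN : p.2 < univ.sup f) (b : Fin k) :
    content f (Function.update T p (some b)) + Pi.single a 1 = content f T + Pi.single b 1 := by
  have hmem : p ∈ univ ×ˢ range (univ.sup f) := by simpa using hpN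
  funext l
  simp only [Pi.add_apply, content, card_filter]
  rw [← add_sum_erase _ _ hmem, ← add_sum_erase _ _ hmem, Function.update_self, hp,
    sum_congr rfl fun c hc => by rw [Function.update_of_ne (ne_of_mem_erase hc)]]
  simp only [Pi.single_apply, Option.some.injEq]
  split_ifs <;> omega

lemma IsSSYTContent.exists_move {f c : Fin k → ℕ} (hc : IsSSYTContent f c) {A B : Fin k}
    (hAB : (A : ℕ) + 1 = B) (hlt : c B < c A) :
    ∃ c', IsSSYTContent f c' ∧ c' + Pi.single A 1 = c + Pi.single B 1 := by
  obtain ⟨T, hT, rfl⟩ := hc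
  obtain ⟨i, j, hA, hnoB, hright⟩ := hT.exists_movable_cell hAB hlt
  refine ⟨_, ⟨_, hT.update hA ?_ ?_ ?_ ?_, rfl⟩,
    content_update_add_single hA ((hT.lt_of_eq_some hA).trans_le (le_sup (mem_univ i))) B⟩
  · intro j' hj' x hx
    exact (hT.2.1 _ _ _ _ _ hj'.le hx hA).trans (Fin.le_def.mpr (by omega))
  · intro j' hj' x hx
    have := Fin.le_def.mp (hT.2.1 _ _ _ _ _ hj'.le hA hx)
    have : x ≠ A := by rintro rfl; exact hright j' hj' hx
    have := Fin.val_ne_of_ne this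
    exact Fin.le_def.mpr (by omega)
  · intro i' hi' x hx
    exact (hT.2.2 _ _ _ _ _ hi' hx hA).trans (Fin.lt_def.mpr (by omega))
  · intro i' hi' x hx
    have := Fin.lt_def.mp (hT.2.2 _ _ _ _ _ hi' hA hx)
    have : x ≠ B := by rintro rfl; exact hnoB i' hx
    have := Fin.val_ne_of_ne this
    exact Fin.lt_def.mpr (by omega)

lemma exists_isSSYTContent_add_eq_of_dominates {lam mu nu c d : Fin k → ℕ} (hnu : Antitone nu)
    (hc : IsSSYTContent lam c) (hd : IsSSYTContent mu d)
    (hdom : ∀ t, partialSum nu t ≤ partialSum (c + d) t) (htot : ∑ i, (c + d) i = ∑ i, nu i) :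
    ∃ c' d', IsSSYTContent lam c' ∧ IsSSYTContent mu d' ∧ c' + d' = nu := by
  induction hn : ∑ t ∈ range k, partialSum (c + d) t using Nat.strong_induction_on
    generalizing c d with
  | _ n ih =>
  by_cases he : c + d = nu
  · exact ⟨c, d, hc, hd, he⟩
  obtain ⟨A, B, hAB, hstrict, hdesc⟩ := exists_descent_of_dominates hnu hdom htot he
  obtain ⟨c', d', hc', hd', hmove⟩ : ∃ c' d', IsSSYTContent lam c' ∧ IsSSYTContent mu d' ∧
      c' + d' + Pi.single A 1 = c + d + Pi.single B 1 := by
    rcases (show c B < c A ∨ d B < d A by simp only [Pi.add_apply] at hdesc; omega) with h | h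
    · obtain ⟨c', hc', hmove⟩ := hc.exists_move hAB h
      exact ⟨c', d, hc', hd, by rw [add_right_comm, hmove, add_right_comm]⟩
    · obtain ⟨d', hd', hmove⟩ := hd.exists_move hAB h
      exact ⟨c, d', hc, hd', by rw [add_assoc, hmove, add_assoc]⟩
  have hps := partialSum_eq_of_add_single_eq hAB hmove
  refine ih _ ?_ hc' hd' (fun t => ?_) ?_ rfl
  · rw [← hn]
    refine sum_lt_sum (fun t _ => (hps t).symm ▸ le_self_add) ⟨B, by simp, ?_⟩
    have := hps B
    rw [if_pos rfl] at this
    omega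
  · have := hps t
    have := hdom t
    split_ifs at * with ht
    · subst ht
      omega
    · omega
  · have := hps k
    rw [partialSum_of_le _ le_rfl, partialSum_of_le _ le_rfl, if_neg B.isLt.ne', add_zero] at this
    rw [this, htot]

end

/-- For partitions `λ, μ, ν` with at most `k` parts and `|ν| = |λ| + |μ|`, the
monomial `x^ν` appears in `s_λ s_μ` iff `ν` is dominated by `λ + μ`. -/
theorem stmt14 {k : ℕ} (lam mu nu : Fin k → ℕ)
    (hlam : Antitone lam) (hmu : Antitone mu) (hnu : Antitone nu)
    (hsum : ∑ i, nu i = ∑ i, lam i + ∑ i, mu i) :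
    coeff (Finsupp.equivFunOnFinite.symm nu) (schurPoly lam * schurPoly mu) ≠ 0 ↔
      ∀ t : ℕ, ∑ i ∈ univ.filter (fun i : Fin k => (i : ℕ) < t), nu i
        ≤ ∑ i ∈ univ.filter (fun i : Fin k => (i : ℕ) < t), (lam i + mu i) := by
  rw [coeff_schurPoly_mul_ne_zero_iff]
  constructor
  · rintro ⟨c, d, hc, hd, rfl⟩ t
    calc partialSum (c + d) t = partialSum c t + partialSum d t := partialSum_add c d t
      _ ≤ partialSum lam t + partialSum mu t :=
        add_le_add (hc.partialSum_le hlam t) (hd.partialSum_le hmu t)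
      _ = partialSum (lam + mu) t := (partialSum_add lam mu t).symm
  · intro hdom
    exact exists_isSSYTContent_add_eq_of_dominates hnu (isSSYTContent_self lam)
      (isSSYTContent_self mu) hdom (by rw [hsum, ← sum_add_distrib]; rfl)

end
end
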